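/- arXiv:2508.05347 — 3 statements merged into one kernel-verified Lean document; each statement's English description precedes it below -/
import Mathlib

section
/- The quantity ab + ac + bc − s² is invariant under multiplication of the column vector (a,b,c,s) by each of the 4×4 integer matrices U, V, W. -/
open Matrix

section

variable {R : Type*} [CommRing R]

theorem form_invariant_move (a b c s : R) :
    (a + b + c + 2 * s) * b + (a + b + c + 2 * s) * c + b * c - (b + c + s) ^ 2 =
      a * b + a * c + b * c - s ^ 2 := by
  ring

theorem mulVec_U (v : Fin 4 → R) :
    !![1,1,1,2; 0,1,0,0; 0,0,1,0; 0,1,1,1] *ᵥ v =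
      ![v 0 + v 1 + v 2 + 2 * v 3, v 1, v 2, v 1 + v 2 + v 3] := by
  ext i
  fin_cases i <;> simp [mulVec, dotProduct, Fin.sum_univ_four]

theorem mulVec_V (v : Fin 4 → R) :
    !![1,0,0,0; 1,1,1,2; 0,0,1,0; 1,0,1,1] *ᵥ v =
      ![v 0, v 0 + v 1 + v 2 + 2 * v 3, v 2, v 0 + v 2 + v 3] := by
  ext i
  fin_cases i <;> simp [mulVec, dotProduct, Fin.sum_univ_four]

theorem mulVec_W (v : Fin 4 → R) :
    !![1,0,0,0; 0,1,0,0; 1,1,1,2; 1,1,0,1] *ᵥ v =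
      ![v 0, v 1, v 0 + v 1 + v 2 + 2 * v 3, v 0 + v 1 + v 3] := by
  ext i
  fin_cases i <;> simp [mulVec, dotProduct, Fin.sum_univ_four]

end

/-- The quadratic form `ab + ac + bc − s²` is invariant under `U`, `V`, `W`. -/
theorem form_invariant_UVW
    (U V W : Matrix (Fin 4) (Fin 4) ℤ)
    (hU : U = !![1,1,1,2; 0,1,0,0; 0,0,1,0; 0,1,1,1])
    (hV : V = !![1,0,0,0; 1,1,1,2; 0,0,1,0; 1,0,1,1])
    (hW : W = !![1,0,0,0; 0,1,0,0; 1,1,1,2; 1,1,0,1])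
    (Q : (Fin 4 → ℤ) → ℤ)
    (hQ : ∀ v, Q v = v 0 * v 1 + v 0 * v 2 + v 1 * v 2 - (v 3) ^ 2) :
    ∀ v : Fin 4 → ℤ, Q (U.mulVec v) = Q v ∧ Q (V.mulVec v) = Q v ∧ Q (W.mulVec v) = Q v := by
  intro v
  subst hU hV hW
  simp only [hQ, mulVec_U, mulVec_V, mulVec_W, cons_val]
  -- `Q` is symmetric in its first three coordinates, and `V`, `W` are `U` with the roles
  -- of `a`, `b`, `c` permuted.
  refine ⟨?_, ?_, ?_⟩
  · linear_combination form_invariant_move (v 0) (v 1) (v 2) (v 3)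
  · linear_combination form_invariant_move (v 1) (v 0) (v 2) (v 3)
  · linear_combination form_invariant_move (v 2) (v 0) (v 1) (v 3)
end

section
/- The matrices U, V, W generate a free semigroup: if Q₁···Q_r = R₁···R_t with each Q_i, R_j ∈ {U, V, W}, then r = t and Q_i = R_i for all i. -/
open Matrix

private lemma mulU (U : Matrix (Fin 4) (Fin 4) ℤ)
    (hU : U = !![1,1,1,2; 0,1,0,0; 0,0,1,0; 0,1,1,1]) (w : Fin 4 → ℤ) :
    U *ᵥ w = ![w 0 + w 1 + w 2 + 2*w 3, w 1, w 2, w 1 + w 2 + w 3] := by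
  subst hU
  funext i
  fin_cases i <;>
    simp [Matrix.mulVec, dotProduct, Fin.sum_univ_four]

private lemma mulV (V : Matrix (Fin 4) (Fin 4) ℤ)
    (hV : V = !![1,0,0,0; 1,1,1,2; 0,0,1,0; 1,0,1,1]) (w : Fin 4 → ℤ) :
    V *ᵥ w = ![w 0, w 0 + w 1 + w 2 + 2*w 3, w 2, w 0 + w 2 + w 3] := by
  subst hV
  funext i
  fin_cases i <;>
    simp [Matrix.mulVec, dotProduct, Fin.sum_univ_four]

private lemma mulW (W : Matrix (Fin 4) (Fin 4) ℤ)
    (hW : W = !![1,0,0,0; 0,1,0,0; 1,1,1,2; 1,1,0,1]) (w : Fin 4 → ℤ) :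
    W *ᵥ w = ![w 0, w 1, w 0 + w 1 + w 2 + 2*w 3, w 0 + w 1 + w 3] := by
  subst hW
  funext i
  fin_cases i <;>
    simp [Matrix.mulVec, dotProduct, Fin.sum_univ_four]

private lemma pos_w (U V W : Matrix (Fin 4) (Fin 4) ℤ)
    (hU : U = !![1,1,1,2; 0,1,0,0; 0,0,1,0; 0,1,1,1])
    (hV : V = !![1,0,0,0; 1,1,1,2; 0,0,1,0; 1,0,1,1])
    (hW : W = !![1,0,0,0; 0,1,0,0; 1,1,1,2; 1,1,0,1]) :
    ∀ L : List (Matrix (Fin 4) (Fin 4) ℤ),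
    (∀ X ∈ L, X = U ∨ X = V ∨ X = W) →
    ∀ i, 0 < (L.prod *ᵥ ![1,1,1,1]) i := by
  subst hU hV hW
  intro L
  induction L with
  | nil => intro _ i; fin_cases i <;> simp
  | cons Q L ih =>
    intro h i
    have hQ := h Q (List.mem_cons_self ..)
    have hL := ih (fun X hX => h X (List.mem_cons_of_mem _ hX))
    rw [List.prod_cons, ← Matrix.mulVec_mulVec]
    have h0 := hL 0; have h1 := hL 1; have h2 := hL 2; have h3 := hL 3
    set w := L.prod *ᵥ ![1,1,1,1] with hw
    rcases hQ with rfl | rfl | rfl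
    · rw [mulU _ rfl]; fin_cases i <;> simp <;> linarith
    · rw [mulV _ rfl]; fin_cases i <;> simp <;> linarith
    · rw [mulW _ rfl]; fin_cases i <;> simp <;> linarith

private lemma headU (U V W : Matrix (Fin 4) (Fin 4) ℤ)
    (hU : U = !![1,1,1,2; 0,1,0,0; 0,0,1,0; 0,1,1,1])
    (hV : V = !![1,0,0,0; 1,1,1,2; 0,0,1,0; 1,0,1,1])
    (hW : W = !![1,0,0,0; 0,1,0,0; 1,1,1,2; 1,1,0,1])
    (L : List (Matrix (Fin 4) (Fin 4) ℤ))
    (hL : ∀ X ∈ L, X = U ∨ X = V ∨ X = W) :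
    ((U::L).prod *ᵥ ![1,1,1,1]) 1 < ((U::L).prod *ᵥ ![1,1,1,1]) 0 ∧
    ((U::L).prod *ᵥ ![1,1,1,1]) 2 < ((U::L).prod *ᵥ ![1,1,1,1]) 0 := by
  have hw := pos_w U V W hU hV hW L hL
  rw [List.prod_cons, ← Matrix.mulVec_mulVec, mulU U hU]
  have h0 := hw 0; have h1 := hw 1; have h2 := hw 2; have h3 := hw 3
  constructor <;> simp <;> linarith

private lemma headV (U V W : Matrix (Fin 4) (Fin 4) ℤ)
    (hU : U = !![1,1,1,2; 0,1,0,0; 0,0,1,0; 0,1,1,1])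
    (hV : V = !![1,0,0,0; 1,1,1,2; 0,0,1,0; 1,0,1,1])
    (hW : W = !![1,0,0,0; 0,1,0,0; 1,1,1,2; 1,1,0,1])
    (L : List (Matrix (Fin 4) (Fin 4) ℤ))
    (hL : ∀ X ∈ L, X = U ∨ X = V ∨ X = W) :
    ((V::L).prod *ᵥ ![1,1,1,1]) 0 < ((V::L).prod *ᵥ ![1,1,1,1]) 1 ∧
    ((V::L).prod *ᵥ ![1,1,1,1]) 2 < ((V::L).prod *ᵥ ![1,1,1,1]) 1 := by
  have hw := pos_w U V W hU hV hW L hL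
  rw [List.prod_cons, ← Matrix.mulVec_mulVec, mulV V hV]
  have h0 := hw 0; have h1 := hw 1; have h2 := hw 2; have h3 := hw 3
  constructor <;> simp <;> linarith

private lemma headW (U V W : Matrix (Fin 4) (Fin 4) ℤ)
    (hU : U = !![1,1,1,2; 0,1,0,0; 0,0,1,0; 0,1,1,1])
    (hV : V = !![1,0,0,0; 1,1,1,2; 0,0,1,0; 1,0,1,1])
    (hW : W = !![1,0,0,0; 0,1,0,0; 1,1,1,2; 1,1,0,1])
    (L : List (Matrix (Fin 4) (Fin 4) ℤ))
    (hL : ∀ X ∈ L, X = U ∨ X = V ∨ X = W) :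
    ((W::L).prod *ᵥ ![1,1,1,1]) 0 < ((W::L).prod *ᵥ ![1,1,1,1]) 2 ∧
    ((W::L).prod *ᵥ ![1,1,1,1]) 1 < ((W::L).prod *ᵥ ![1,1,1,1]) 2 := by
  have hw := pos_w U V W hU hV hW L hL
  rw [List.prod_cons, ← Matrix.mulVec_mulVec, mulW W hW]
  have h0 := hw 0; have h1 := hw 1; have h2 := hw 2; have h3 := hw 3
  constructor <;> simp <;> linarith

private lemma cancel {Q Qi a b : Matrix (Fin 4) (Fin 4) ℤ} (h : Qi * Q = 1)
    (hab : Q * a = Q * b) : a = b := by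
  have h2 := congrArg (Qi * ·) hab
  simpa [← mul_assoc, h] using h2

private lemma invU (U : Matrix (Fin 4) (Fin 4) ℤ)
    (hU : U = !![1,1,1,2; 0,1,0,0; 0,0,1,0; 0,1,1,1]) :
    (!![1,1,1,-2; 0,1,0,0; 0,0,1,0; 0,-1,-1,1] : Matrix (Fin 4) (Fin 4) ℤ) * U = 1 := by
  subst hU
  ext i j
  fin_cases i <;> fin_cases j <;>
    simp [Matrix.mul_apply, Fin.sum_univ_four, Matrix.one_apply,
      Matrix.vecHead, Matrix.vecTail]

private lemma invV (V : Matrix (Fin 4) (Fin 4) ℤ)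
    (hV : V = !![1,0,0,0; 1,1,1,2; 0,0,1,0; 1,0,1,1]) :
    (!![1,0,0,0; 1,1,1,-2; 0,0,1,0; -1,0,-1,1] : Matrix (Fin 4) (Fin 4) ℤ) * V = 1 := by
  subst hV
  ext i j
  fin_cases i <;> fin_cases j <;>
    simp [Matrix.mul_apply, Fin.sum_univ_four, Matrix.one_apply,
      Matrix.vecHead, Matrix.vecTail]

private lemma invW (W : Matrix (Fin 4) (Fin 4) ℤ)
    (hW : W = !![1,0,0,0; 0,1,0,0; 1,1,1,2; 1,1,0,1]) :
    (!![1,0,0,0; 0,1,0,0; 1,1,1,-2; -1,-1,0,1] : Matrix (Fin 4) (Fin 4) ℤ) * W = 1 := by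
  subst hW
  ext i j
  fin_cases i <;> fin_cases j <;>
    simp [Matrix.mul_apply, Fin.sum_univ_four, Matrix.one_apply,
      Matrix.vecHead, Matrix.vecTail]

/-- `U`, `V`, `W` generate a free semigroup: two products of generators agree
only if the words agree. -/
theorem UVW_free_semigroup
    (U V W : Matrix (Fin 4) (Fin 4) ℤ)
    (hU : U = !![1,1,1,2; 0,1,0,0; 0,0,1,0; 0,1,1,1])
    (hV : V = !![1,0,0,0; 1,1,1,2; 0,0,1,0; 1,0,1,1])
    (hW : W = !![1,0,0,0; 0,1,0,0; 1,1,1,2; 1,1,0,1]) :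
    ∀ L M : List (Matrix (Fin 4) (Fin 4) ℤ),
      (∀ X ∈ L, X = U ∨ X = V ∨ X = W) →
      (∀ X ∈ M, X = U ∨ X = V ∨ X = W) →
      L.prod = M.prod → L = M := by
  subst hU hV hW
  intro L
  induction L with
  | nil =>
    intro M _ hM hp
    cases M with
    | nil => rfl
    | cons R M' =>
      exfalso
      have hM' : ∀ X ∈ M', X = _ ∨ X = _ ∨ X = _ :=
        fun X hX => hM X (List.mem_cons_of_mem _ hX)
      rcases hM R (List.mem_cons_self ..) with rfl | rfl | rfl
      · have h := headU _ _ _ rfl rfl rfl M' hM'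
        rw [← hp] at h; simp at h
      · have h := headV _ _ _ rfl rfl rfl M' hM'
        rw [← hp] at h; simp at h
      · have h := headW _ _ _ rfl rfl rfl M' hM'
        rw [← hp] at h; simp at h
  | cons Q L' ih =>
    intro M hL hM hp
    have hL' : ∀ X ∈ L', X = _ ∨ X = _ ∨ X = _ :=
      fun X hX => hL X (List.mem_cons_of_mem _ hX)
    cases M with
    | nil =>
      exfalso
      rcases hL Q (List.mem_cons_self ..) with rfl | rfl | rfl
      · have h := headU _ _ _ rfl rfl rfl L' hL'
        rw [hp] at h; simp at h
      · have h := headV _ _ _ rfl rfl rfl L' hL'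
        rw [hp] at h; simp at h
      · have h := headW _ _ _ rfl rfl rfl L' hL'
        rw [hp] at h; simp at h
    | cons R M' =>
      have hM' : ∀ X ∈ M', X = _ ∨ X = _ ∨ X = _ :=
        fun X hX => hM X (List.mem_cons_of_mem _ hX)
      have hpp : Q * L'.prod = R * M'.prod := by
        simpa [List.prod_cons] using hp
      rcases hL Q (List.mem_cons_self ..) with rfl | rfl | rfl <;>
        rcases hM R (List.mem_cons_self ..) with rfl | rfl | rfl
      · rw [ih M' hL' hM' (cancel (invU _ rfl) hpp)]
      · exfalso
        have h1 := headU _ _ _ rfl rfl rfl L' hL'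
        have h2 := headV _ _ _ rfl rfl rfl M' hM'
        rw [hp] at h1
        linarith [h1.1, h2.1]
      · exfalso
        have h1 := headU _ _ _ rfl rfl rfl L' hL'
        have h2 := headW _ _ _ rfl rfl rfl M' hM'
        rw [hp] at h1
        linarith [h1.2, h2.1]
      · exfalso
        have h1 := headV _ _ _ rfl rfl rfl L' hL'
        have h2 := headU _ _ _ rfl rfl rfl M' hM'
        rw [hp] at h1
        linarith [h1.1, h2.1]
      · rw [ih M' hL' hM' (cancel (invV _ rfl) hpp)]
      · exfalso
        have h1 := headV _ _ _ rfl rfl rfl L' hL'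
        have h2 := headW _ _ _ rfl rfl rfl M' hM'
        rw [hp] at h1
        linarith [h1.2, h2.2]
      · exfalso
        have h1 := headW _ _ _ rfl rfl rfl L' hL'
        have h2 := headU _ _ _ rfl rfl rfl M' hM'
        rw [hp] at h1
        linarith [h1.1, h2.2]
      · exfalso
        have h1 := headW _ _ _ rfl rfl rfl L' hL'
        have h2 := headV _ _ _ rfl rfl rfl M' hM'
        rw [hp] at h1
        linarith [h1.2, h2.2]
      · rw [ih M' hL' hM' (cancel (invW _ rfl) hpp)]
end

section
/- If three integer points span a primitive triangle (not all lying in any proper square sublattice of ℤ²), then among the three squared side lengths A, B, C exactly one is even, and the two odd ones are each ≡ 1 (mod 4). -/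
set_option maxHeartbeats 800000

/-- A square modulo 4 equals the base modulo 2. -/
lemma sq_mod_four (x : ℤ) : x ^ 2 % 4 = x % 2 := by
  rcases Int.even_or_odd x with ⟨k, hk⟩ | ⟨k, hk⟩
  · have h1 : x ^ 2 = 4 * (k * k) := by rw [hk]; ring
    have h2 : x ^ 2 % 4 = 0 := by rw [h1]; exact Int.mul_emod_right 4 _
    set y := x ^ 2
    omega
  · have h1 : x ^ 2 = 1 + 4 * (k * k + k) := by rw [hk]; ring
    have h2 : x ^ 2 % 4 = 1 := by rw [h1, Int.add_mul_emod_self_left]; norm_num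
    set y := x ^ 2
    omega

/-- A square sublattice of `ℤ²` is `{m·u + n·u^⊥}` for `u = (p,q) ≠ 0`; it is
proper iff `p² + q² > 1`. A triangle is primitive if the difference vectors of
its vertices do not all lie in a proper square sublattice. For a primitive
triangle, exactly one of the squared side lengths `A`, `B`, `C` is even, and
the two odd ones are `≡ 1 (mod 4)`. -/
theorem primitive_triangle_parity (x₁ y₁ x₂ y₂ x₃ y₃ A B C : ℤ)
    (hA : A = (x₂ - x₃) ^ 2 + (y₂ - y₃) ^ 2)
    (hB : B = (x₃ - x₁) ^ 2 + (y₃ - y₁) ^ 2)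
    (hC : C = (x₁ - x₂) ^ 2 + (y₁ - y₂) ^ 2)
    (hprim : ¬ ∃ p q : ℤ, p ^ 2 + q ^ 2 > 1 ∧
      (∃ m n : ℤ, x₂ - x₁ = m * p - n * q ∧ y₂ - y₁ = m * q + n * p) ∧
      (∃ m n : ℤ, x₃ - x₁ = m * p - n * q ∧ y₃ - y₁ = m * q + n * p)) :
    (Even A ∧ Odd B ∧ Odd C ∧ B % 4 = 1 ∧ C % 4 = 1) ∨
    (Even B ∧ Odd C ∧ Odd A ∧ C % 4 = 1 ∧ A % 4 = 1) ∨
    (Even C ∧ Odd A ∧ Odd B ∧ A % 4 = 1 ∧ B % 4 = 1) := by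
  have hkey : (x₂ - x₁ + (y₂ - y₁)) % 2 = 1 ∨ (x₃ - x₁ + (y₃ - y₁)) % 2 = 1 := by
    by_contra h
    push_neg at h
    obtain ⟨h1, h2⟩ := h
    exact hprim ⟨1, 1, by norm_num,
      ⟨(x₂ - x₁ + (y₂ - y₁)) / 2, (y₂ - y₁ - (x₂ - x₁)) / 2, by omega, by omega⟩,
      ⟨(x₃ - x₁ + (y₃ - y₁)) / 2, (y₃ - y₁ - (x₃ - x₁)) / 2, by omega, by omega⟩⟩
  have hA' : A = (x₂ - x₁ - (x₃ - x₁)) ^ 2 + (y₂ - y₁ - (y₃ - y₁)) ^ 2 := by rw [hA]; ring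
  have hC' : C = (x₂ - x₁) ^ 2 + (y₂ - y₁) ^ 2 := by rw [hC]; ring
  have hA4 : A % 4 = ((x₂ - x₁ - (x₃ - x₁)) % 2 + (y₂ - y₁ - (y₃ - y₁)) % 2) % 4 := by
    rw [hA', Int.add_emod, sq_mod_four, sq_mod_four]
  have hB4 : B % 4 = ((x₃ - x₁) % 2 + (y₃ - y₁) % 2) % 4 := by
    rw [hB, Int.add_emod, sq_mod_four, sq_mod_four]
  have hC4 : C % 4 = ((x₂ - x₁) % 2 + (y₂ - y₁) % 2) % 4 := by
    rw [hC', Int.add_emod, sq_mod_four, sq_mod_four]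
  clear hA hB hC hA' hC' hprim
  simp only [Int.even_iff, Int.odd_iff]
  omega
end
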